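/- Let Ξ₋ = cos(2τ)A₁ - i sin(2τ)A₂ where A₁, A₂ are the 4×4 matrices from the all-qubit collision model with ρ₁ = 1, ρ₂ = ρ₃ = 0. Then Ξ₋ is block diagonal with respect to the partition {0,1} ∪ {2,3} of indices, and its upper-left 2×2 block equals C = [[cos(2τ), -i sin(2τ)cos(2ε)],[cos(2τ)cos(2ε), -i sin(2τ)]]; consequently [Ξ₋ⁿ]₀₀ + [Ξ₋ⁿ]₀₁ = [Cⁿ]₀₀ + [Cⁿ]₀₁ and [Ξ₋ⁿ]₀₂ = [Ξ₋ⁿ]₀₃ = 0 for all n ≥ 1. -/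
import Mathlib


open Complex Matrix

private lemma aux_block (M : Matrix (Fin 4) (Fin 4) ℂ) (N : Matrix (Fin 2) (Fin 2) ℂ)
    (h00 : M 0 0 = N 0 0) (h01 : M 0 1 = N 0 1) (h10 : M 1 0 = N 1 0) (h11 : M 1 1 = N 1 1)
    (h02 : M 0 2 = 0) (h03 : M 0 3 = 0) (h12 : M 1 2 = 0) (h13 : M 1 3 = 0) :
    ∀ n : ℕ, 1 ≤ n → (M ^ n) 0 0 = (N ^ n) 0 0 ∧ (M ^ n) 0 1 = (N ^ n) 0 1
      ∧ (M ^ n) 0 2 = 0 ∧ (M ^ n) 0 3 = 0 := by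
  intro n hn
  induction n with
  | zero => omega
  | succ m ih =>
    rcases Nat.eq_or_lt_of_le hn with h1 | h1
    · simp only [← h1, pow_one]
      exact ⟨h00, h01, h02, h03⟩
    · have hm : 1 ≤ m := by omega
      obtain ⟨e0, e1, e2, e3⟩ := ih hm
      rw [pow_succ, pow_succ]
      simp only [Matrix.mul_apply, Fin.sum_univ_four, Fin.sum_univ_two,
        e0, e1, e2, e3, h00, h01, h10, h11, h02, h03, h12, h13,
        zero_mul, add_zero, mul_zero]
      exact ⟨trivial, trivial, trivial, trivial⟩

theorem stmt_19 (τ ε : ℝ)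
    (A₁ A₂ : Matrix (Fin 4) (Fin 4) ℂ)
    (hA₁ : A₁ = !![1, 0, 0, 0;
                   (Real.cos (2*ε) : ℂ), 0, 0, 0;
                   0, 0, 0, -I * Real.sin (2*ε);
                   0, 0, 0, 0])
    (hA₂ : A₂ = !![0, (Real.cos (2*ε) : ℂ), 0, 0;
                   0, 1, 0, 0;
                   0, 0, 0, 0;
                   0, 0, -I * Real.sin (2*ε), 0])
    (Ξm : Matrix (Fin 4) (Fin 4) ℂ)
    (hΞm : Ξm = (Real.cos (2*τ) : ℂ) • A₁ - (I * Real.sin (2*τ)) • A₂)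
    (C : Matrix (Fin 2) (Fin 2) ℂ)
    (hC : C = !![(Real.cos (2*τ) : ℂ), -I * Real.sin (2*τ) * Real.cos (2*ε);
                 (Real.cos (2*τ) : ℂ) * Real.cos (2*ε), -I * Real.sin (2*τ)]) :
    -- block diagonality w.r.t. the partition {0,1} ∪ {2,3}
    (∀ i j : Fin 4, ((i : ℕ) < 2 ∧ 2 ≤ (j : ℕ)) ∨ (2 ≤ (i : ℕ) ∧ (j : ℕ) < 2) →
        Ξm i j = 0)
    -- upper-left 2×2 block equals C
    ∧ (Ξm 0 0 = C 0 0 ∧ Ξm 0 1 = C 0 1 ∧ Ξm 1 0 = C 1 0 ∧ Ξm 1 1 = C 1 1)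
    -- consequences for powers
    ∧ (∀ n : ℕ, 1 ≤ n →
        (Ξm ^ n) 0 0 + (Ξm ^ n) 0 1 = (C ^ n) 0 0 + (C ^ n) 0 1
        ∧ (Ξm ^ n) 0 2 = 0 ∧ (Ξm ^ n) 0 3 = 0) := by
  have h02 : Ξm 0 2 = 0 := by subst hA₁ hA₂ hΞm; simp [Matrix.vecHead, Matrix.vecTail]
  have h03 : Ξm 0 3 = 0 := by subst hA₁ hA₂ hΞm; simp [Matrix.vecHead, Matrix.vecTail]
  have h12 : Ξm 1 2 = 0 := by subst hA₁ hA₂ hΞm; simp [Matrix.vecHead, Matrix.vecTail]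
  have h13 : Ξm 1 3 = 0 := by subst hA₁ hA₂ hΞm; simp [Matrix.vecHead, Matrix.vecTail]
  have h20 : Ξm 2 0 = 0 := by subst hA₁ hA₂ hΞm; simp [Matrix.vecHead, Matrix.vecTail]
  have h21 : Ξm 2 1 = 0 := by subst hA₁ hA₂ hΞm; simp [Matrix.vecHead, Matrix.vecTail]
  have h30 : Ξm 3 0 = 0 := by subst hA₁ hA₂ hΞm; simp [Matrix.vecHead, Matrix.vecTail]
  have h31 : Ξm 3 1 = 0 := by subst hA₁ hA₂ hΞm; simp [Matrix.vecHead, Matrix.vecTail]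
  have h00 : Ξm 0 0 = C 0 0 := by subst hA₁ hA₂ hΞm hC; simp [Matrix.vecHead, Matrix.vecTail]
  have h01 : Ξm 0 1 = C 0 1 := by
    subst hA₁ hA₂ hΞm hC; simp [Matrix.vecHead, Matrix.vecTail]; try ring
  have h10 : Ξm 1 0 = C 1 0 := by
    subst hA₁ hA₂ hΞm hC; simp [Matrix.vecHead, Matrix.vecTail]; try ring
  have h11 : Ξm 1 1 = C 1 1 := by
    subst hA₁ hA₂ hΞm hC; simp [Matrix.vecHead, Matrix.vecTail]
  refine ⟨?_, ⟨h00, h01, h10, h11⟩, ?_⟩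
  · intro i j h
    have : ∀ p q : Fin 4, Ξm p q = Ξm p q := fun _ _ => rfl
    fin_cases i <;> fin_cases j <;> simp only [Fin.isValue] at h ⊢ <;>
      first
        | exact h02 | exact h03 | exact h12 | exact h13
        | exact h20 | exact h21 | exact h30 | exact h31
        | omega
  · intro n hn
    obtain ⟨e0, e1, e2, e3⟩ := aux_block Ξm C h00 h01 h10 h11 h02 h03 h12 h13 n hn
    exact ⟨by rw [e0, e1], e2, e3⟩
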